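/- arXiv:2006.04291 — 4 statements merged into one kernel-verified Lean document; each statement's English description precedes it below -/
import Mathlib

section
/- (α-robust positivity) For every δ ∈ (0, π) there exists a constant C_δ > 0 such that for all α ∈ (0,1) and all y ∈ [δ, π]: (sin(π(1-α))/π) ∫₀^∞ s^(α-2)(1-e^(-2s))(1-cos y)/(1 - 2e^(-s) cos y + e^(-2s)) ds ≥ C_δ. -/
/-!
The denominator is `|1 - t e^{iy}|²` with `t = e^{-s}`, which lies between `(1 - t)²` and `4`,
so the ratio `(1 - cos y) / (1 - 2 t cos y + t²)` stays between `(1 - cos y) / 4` and `2`.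
Together with `1 - e^{-2s} ≍ min s 1`, the integrand is comparable to
`(1 - cos y) s^(α-2) min s 1`, whose integral is `(1 - cos y) (1/α + 1/(1-α))`. This blows up
like `1 / (α (1 - α))` at both ends, which is exactly compensated by
`sin (π (1 - α)) ≥ 2 α (1 - α)`.
-/

open MeasureTheory Real Set

lemma div_one_add_le_one_sub_exp_neg {x : ℝ} (hx : 0 ≤ x) : x / (1 + x) ≤ 1 - exp (-x) := by
  have h : exp (-x) * (1 + x) ≤ 1 := by
    rw [exp_neg, inv_mul_le_iff₀ (exp_pos x), mul_one]
    linarith [add_one_le_exp x]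
  rw [div_le_iff₀ (by linarith)]
  linarith

lemma one_sub_exp_neg_two_mul_mem_Icc {s : ℝ} (hs : 0 ≤ s) :
    1 - exp (-2 * s) ∈ Icc (2 / 3 * min s 1) (2 * min s 1) := by
  have hle : 1 - exp (-2 * s) ≤ 2 * s := by linarith [add_one_le_exp (-2 * s)]
  have hle_one : 1 - exp (-2 * s) ≤ 1 := by linarith [exp_pos (-2 * s)]
  have hge := div_one_add_le_one_sub_exp_neg (by linarith : 0 ≤ 2 * s)
  rw [neg_mul] at hle hle_one ⊢
  rcases le_total s 1 with h | h
  · rw [min_eq_left h]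
    refine ⟨le_trans ?_ hge, hle⟩
    rw [le_div_iff₀ (by linarith)]
    nlinarith
  · rw [min_eq_right h]
    refine ⟨le_trans ?_ hge, by linarith⟩
    rw [le_div_iff₀ (by linarith)]
    linarith

section Kernel

variable {t c : ℝ}

lemma kernel_denom_pos (ht : 0 ≤ t) (ht1 : t < 1) (hc : c ≤ 1) : 0 < 1 - 2 * t * c + t ^ 2 := by
  nlinarith [mul_nonneg ht (sub_nonneg.2 hc), pow_pos (sub_pos.2 ht1) 2]

lemma kernel_denom_le_four (ht : 0 ≤ t) (ht1 : t ≤ 1) (hc : -1 ≤ c) :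
    1 - 2 * t * c + t ^ 2 ≤ 4 := by
  nlinarith [mul_nonneg ht (by linarith : (0:ℝ) ≤ 1 + c)]

lemma one_sub_le_two_mul_kernel_denom (ht : 0 ≤ t) (hc : -1 ≤ c) (hc1 : c ≤ 1) :
    1 - c ≤ 2 * (1 - 2 * t * c + t ^ 2) := by
  rcases le_or_gt c 0 with h | h
  · nlinarith [mul_nonneg ht (neg_nonneg.2 h), sq_nonneg t]
  · nlinarith [sq_nonneg (t - c), mul_nonneg h.le (sub_nonneg.2 hc1)]

lemma kernel_ratio_mem_Icc (ht : 0 ≤ t) (ht1 : t < 1) (hc : -1 ≤ c) (hc1 : c ≤ 1) :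
    (1 - c) / (1 - 2 * t * c + t ^ 2) ∈ Icc ((1 - c) / 4) 2 := by
  have hD := kernel_denom_pos ht ht1 hc1
  exact ⟨div_le_div_of_nonneg_left (by linarith) hD (kernel_denom_le_four ht ht1.le hc),
    (div_le_iff₀ hD).2 (one_sub_le_two_mul_kernel_denom ht hc hc1)⟩

end Kernel

section Integrals

variable {α : ℝ}

lemma rpow_mul_min_one_eqOn_Ioc :
    EqOn (fun s : ℝ => s ^ (α - 2) * min s 1) (fun s => s ^ (α - 1)) (Ioc 0 1) := by
  intro s ⟨hs0, hs1⟩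
  simp only [min_eq_left hs1]
  rw [show α - 1 = (α - 2) + 1 by ring, rpow_add_one hs0.ne']

lemma rpow_mul_min_one_eqOn_Ioi :
    EqOn (fun s : ℝ => s ^ (α - 2) * min s 1) (fun s => s ^ (α - 2)) (Ioi 1) := by
  intro s (hs : 1 < s)
  simp only [min_eq_right hs.le, mul_one]

lemma integrableOn_rpow_mul_min_one (hα : α ∈ Ioo 0 1) :
    IntegrableOn (fun s : ℝ => s ^ (α - 2) * min s 1) (Ioi 0) := by
  rw [← Ioc_union_Ioi_eq_Ioi zero_le_one]
  refine IntegrableOn.union ?_ ?_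
  · exact (integrableOn_congr_fun rpow_mul_min_one_eqOn_Ioc measurableSet_Ioc).2
      (intervalIntegral.intervalIntegrable_rpow' (by linarith [hα.1])).1
  · exact (integrableOn_congr_fun rpow_mul_min_one_eqOn_Ioi measurableSet_Ioi).2
      (integrableOn_Ioi_rpow_of_lt (by linarith [hα.2]) one_pos)

lemma integral_rpow_mul_min_one (hα : α ∈ Ioo 0 1) :
    ∫ s in Ioi 0, s ^ (α - 2) * min s 1 = 1 / α + 1 / (1 - α) := by
  obtain ⟨hα0, hα1⟩ := hα
  have hint := integrableOn_rpow_mul_min_one ⟨hα0, hα1⟩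
  rw [← Ioc_union_Ioi_eq_Ioi zero_le_one] at hint ⊢
  rw [setIntegral_union Ioc_disjoint_Ioi_same measurableSet_Ioi hint.left_of_union
      hint.right_of_union,
    setIntegral_congr_fun measurableSet_Ioc rpow_mul_min_one_eqOn_Ioc,
    setIntegral_congr_fun measurableSet_Ioi rpow_mul_min_one_eqOn_Ioi,
    ← intervalIntegral.integral_of_le zero_le_one, integral_rpow (Or.inl (by linarith)),
    integral_Ioi_rpow_of_lt (by linarith) one_pos]
  have h1 : α - 1 + 1 = α := by ring
  have h2 : α - 2 + 1 = -(1 - α) := by ring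
  rw [h1, h2, zero_rpow hα0.ne', one_rpow, one_rpow]
  field_simp
  ring

end Integrals

lemma kernel_integrand_mem_Icc {α c s : ℝ} (hs : 0 < s) (hc : -1 ≤ c) (hc1 : c ≤ 1) :
    s ^ (α - 2) * (1 - exp (-2 * s)) * (1 - c) / (1 - 2 * exp (-s) * c + exp (-2 * s)) ∈
      Icc ((1 - c) / 6 * (s ^ (α - 2) * min s 1)) (4 * (s ^ (α - 2) * min s 1)) := by
  have hexp : exp (-2 * s) = exp (-s) ^ 2 := by rw [← exp_nat_mul]; ring_nf
  obtain ⟨he, he'⟩ := one_sub_exp_neg_two_mul_mem_Icc hs.le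
  obtain ⟨hr, hr'⟩ := kernel_ratio_mem_Icc (exp_pos (-s)).le
    (exp_lt_one_iff.2 (neg_lt_zero.2 hs)) hc hc1
  have he0 : 0 ≤ 1 - exp (-2 * s) := le_trans (by positivity) he
  have hr0 : 0 ≤ (1 - c) / 4 := div_nonneg (sub_nonneg.2 hc1) zero_le_four
  have heq : s ^ (α - 2) * (1 - exp (-2 * s)) * (1 - c) / (1 - 2 * exp (-s) * c + exp (-2 * s)) =
      s ^ (α - 2) * ((1 - exp (-2 * s)) * ((1 - c) / (1 - 2 * exp (-s) * c + exp (-s) ^ 2))) := by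
    rw [← hexp]; ring
  rw [heq]
  constructor
  · calc (1 - c) / 6 * (s ^ (α - 2) * min s 1)
        = s ^ (α - 2) * (2 / 3 * min s 1 * ((1 - c) / 4)) := by ring
      _ ≤ _ := by gcongr
  · calc _ ≤ s ^ (α - 2) * (2 * min s 1 * 2) := by
          gcongr
          exact hr0.trans hr
      _ = 4 * (s ^ (α - 2) * min s 1) := by ring

lemma le_integral_kernel {α c : ℝ} (hα : α ∈ Ioo 0 1) (hc : -1 ≤ c) (hc1 : c ≤ 1) :
    (1 - c) / 6 * (1 / α + 1 / (1 - α)) ≤ ∫ s in Ioi 0,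
      s ^ (α - 2) * (1 - exp (-2 * s)) * (1 - c) / (1 - 2 * exp (-s) * c + exp (-2 * s)) := by
  have hmin := integrableOn_rpow_mul_min_one hα
  have hbound : ∀ s ∈ Ioi (0 : ℝ), _ := fun s (hs : 0 < s) ↦
    kernel_integrand_mem_Icc (α := α) hs hc hc1
  have hint : IntegrableOn (fun s ↦ s ^ (α - 2) * (1 - exp (-2 * s)) * (1 - c) /
      (1 - 2 * exp (-s) * c + exp (-2 * s))) (Ioi 0) := by
    refine integrable_of_le_of_le (by fun_prop : Measurable _).aestronglyMeasurable ?_ ?_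
      (hmin.const_mul ((1 - c) / 6)) (hmin.const_mul 4)
    · exact (ae_restrict_iff' measurableSet_Ioi).2 (ae_of_all _ fun s hs ↦ (hbound s hs).1)
    · exact (ae_restrict_iff' measurableSet_Ioi).2 (ae_of_all _ fun s hs ↦ (hbound s hs).2)
  rw [← integral_rpow_mul_min_one hα, ← integral_const_mul]
  exact setIntegral_mono_on (hmin.const_mul _) hint measurableSet_Ioi
    fun s hs ↦ (hbound s hs).1

lemma two_mul_le_sin_pi_mul {x : ℝ} (hx : 0 ≤ x) (hx' : x ≤ 1 / 2) :
    2 * x ≤ sin (π * x) := by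
  have h := mul_le_sin (x := π * x) (by positivity) (by nlinarith [pi_pos])
  rwa [← mul_assoc, div_mul_cancel₀ _ pi_ne_zero] at h

lemma two_mul_mul_one_sub_le_sin_pi_mul {x : ℝ} (hx : 0 ≤ x) (hx' : x ≤ 1) :
    2 * x * (1 - x) ≤ sin (π * x) := by
  rcases le_total x (1 / 2) with h | h
  · nlinarith [two_mul_le_sin_pi_mul hx h]
  · have hsymm : sin (π * x) = sin (π * (1 - x)) := by rw [mul_one_sub, sin_pi_sub]
    nlinarith [two_mul_le_sin_pi_mul (x := 1 - x) (by linarith) (by linarith)]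

theorem stmt_14 (δ : ℝ) (hδ : δ ∈ Set.Ioo (0:ℝ) π) :
    ∃ C > 0, ∀ α ∈ Set.Ioo (0:ℝ) 1, ∀ y ∈ Set.Icc δ π,
      C ≤ (sin (π * (1 - α)) / π) *
        ∫ s in Set.Ioi (0:ℝ),
          s ^ (α - 2) * (1 - exp (-2 * s)) * (1 - Real.cos y) /
            (1 - 2 * exp (-s) * Real.cos y + exp (-2 * s)) := by
  obtain ⟨hδ0, hδπ⟩ := hδ
  have hcosδ : cos δ < 1 := by simpa using cos_lt_cos_of_nonneg_of_le_pi le_rfl hδπ.le hδ0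
  refine ⟨(1 - cos δ) / (3 * π), div_pos (by linarith) (by positivity), ?_⟩
  rintro α ⟨hα0, hα1⟩ y ⟨hδy, hyπ⟩
  have hcos : cos y ≤ cos δ := cos_le_cos_of_nonneg_of_le_pi hδ0.le hyπ hδy
  have hsin := two_mul_mul_one_sub_le_sin_pi_mul (x := 1 - α) (by linarith) (by linarith)
  have hint := le_integral_kernel ⟨hα0, hα1⟩ (neg_one_le_cos y) (cos_le_one y)
  calc (1 - cos δ) / (3 * π)
      ≤ (1 - cos y) / (3 * π) := by gcongr
    _ = 2 * (1 - α) * (1 - (1 - α)) / π * ((1 - cos y) / 6 * (1 / α + 1 / (1 - α))) := by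
      field_simp
      ring
    _ ≤ sin (π * (1 - α)) / π * ∫ s in Ioi 0,
          s ^ (α - 2) * (1 - exp (-2 * s)) * (1 - cos y) /
            (1 - 2 * exp (-s) * cos y + exp (-2 * s)) := by
      have hsin0 : 0 ≤ sin (π * (1 - α)) :=
        sin_nonneg_of_nonneg_of_le_pi (by nlinarith [pi_pos]) (by nlinarith [pi_pos])
      have hcos0 : 0 ≤ 1 - cos y := sub_nonneg.2 (cos_le_one y)
      gcongr
end

section
/- Let E : (0,∞) → B be continuously differentiable with ‖E(t)‖ ≤ C t^(α-1) and ‖E'(t)‖ ≤ C t^(α-2) for all t > 0, where B is a Banach space, C > 0, α ∈ (0,1). Let T > 0, J ∈ ℕ_{>0}, τ = T/J, t_j = jτ. Then ∑_{j=1}^J ∫_{t_{j-1}}^{t_j} ‖E(t) - E(t_j)‖ dt ≤ C'·τ^α·(1/α + (1 - J^(α-1))/(1-α)) for a constant C' depending only on C. -/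
open MeasureTheory Real

theorem stmt_15 (C : ℝ) (hC : 0 < C) :
    ∃ C' > 0, ∀ (B : Type) [NormedAddCommGroup B] [NormedSpace ℝ B],
      ∀ (E E' : ℝ → B) (α T : ℝ) (J : ℕ), α ∈ Set.Ioo (0:ℝ) 1 → 0 < T → 0 < J →
        (∀ t > (0:ℝ), HasDerivAt E (E' t) t) →
        ContinuousOn E' (Set.Ioi 0) →
        (∀ t > (0:ℝ), ‖E t‖ ≤ C * t ^ (α - 1)) →
        (∀ t > (0:ℝ), ‖E' t‖ ≤ C * t ^ (α - 2)) →
        ∑ j ∈ Finset.Icc 1 J,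
            (∫ t in (((j:ℝ) - 1) * (T / J))..((j:ℝ) * (T / J)), ‖E t - E ((j:ℝ) * (T / J))‖) ≤
          C' * (T / J) ^ α * (1 / α + (1 - (J:ℝ) ^ (α - 1)) / (1 - α)) := by
  refine ⟨2 * C, by linarith, ?_⟩
  intro B _ _ E E' α T J hα hT hJ hderiv hE'cont hE hE'
  obtain ⟨hα0, hα1⟩ := hα
  set τ : ℝ := T / J with hτdef
  have hJR : (0:ℝ) < J := by exact_mod_cast hJ
  have hτ : 0 < τ := div_pos hT hJR
  have hτα : 0 < τ ^ α := rpow_pos_of_pos hτ α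
  have hEcont : ContinuousOn E (Set.Ioi 0) := fun t ht =>
    (hderiv t ht).continuousAt.continuousWithinAt
  -- Step A : the first interval
  have hrpow_int : IntervalIntegrable (fun t : ℝ => t ^ (α - 1)) volume 0 τ :=
    intervalIntegral.intervalIntegrable_rpow' (by linarith)
  have hg_int : IntervalIntegrable (fun t : ℝ => C * t ^ (α - 1) + C * τ ^ (α - 1))
      volume 0 τ := (hrpow_int.const_mul C).add intervalIntegrable_const
  have hg_intOn : IntegrableOn (fun t : ℝ => C * t ^ (α - 1) + C * τ ^ (α - 1))
      (Set.Ioc 0 τ) volume :=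
    (intervalIntegrable_iff_integrableOn_Ioc_of_le hτ.le).1 hg_int
  have hf_meas : AEStronglyMeasurable (fun t : ℝ => ‖E t - E τ‖)
      (volume.restrict (Set.Ioc 0 τ)) := by
    refine (ContinuousOn.aestronglyMeasurable ?_ measurableSet_Ioc)
    exact ((hEcont.mono (by intro x hx; exact hx.1)).sub continuousOn_const).norm
  have hbound : ∀ t ∈ Set.Ioc (0:ℝ) τ, ‖E t - E τ‖ ≤ C * t ^ (α - 1) + C * τ ^ (α - 1) := by
    intro t ht
    calc ‖E t - E τ‖ ≤ ‖E t‖ + ‖E τ‖ := norm_sub_le _ _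
    _ ≤ C * t ^ (α - 1) + C * τ ^ (α - 1) :=
        add_le_add (hE t ht.1) (hE τ hτ)
  have hf_intOn : IntegrableOn (fun t : ℝ => ‖E t - E τ‖) (Set.Ioc 0 τ) volume := by
    refine hg_intOn.mono' hf_meas ?_
    filter_upwards [ae_restrict_mem measurableSet_Ioc] with t ht
    simpa [abs_of_nonneg (norm_nonneg _)] using hbound t ht
  have hA : (∫ t in (0:ℝ)..τ, ‖E t - E τ‖) ≤ 2 * C / α * τ ^ α := by
    have h1 : (∫ t in (0:ℝ)..τ, ‖E t - E τ‖)
        ≤ ∫ t in (0:ℝ)..τ, (C * t ^ (α - 1) + C * τ ^ (α - 1)) := by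
      rw [intervalIntegral.integral_of_le hτ.le, intervalIntegral.integral_of_le hτ.le]
      exact setIntegral_mono_on hf_intOn hg_intOn measurableSet_Ioc hbound
    have h2 : (∫ t in (0:ℝ)..τ, (C * t ^ (α - 1) + C * τ ^ (α - 1)))
        = C * (τ ^ α / α) + C * (τ ^ (α - 1) * τ) := by
      rw [intervalIntegral.integral_add (hrpow_int.const_mul C) intervalIntegrable_const]
      rw [intervalIntegral.integral_const_mul, integral_rpow (Or.inl (by linarith)),
        intervalIntegral.integral_const]
      rw [sub_add_cancel, Real.zero_rpow hα0.ne', smul_eq_mul]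
      ring
    have hτ' : τ ^ (α - 1) * τ = τ ^ α := by
      norm_num [← Real.rpow_add_one hτ.ne' (α - 1)]
    rw [h2, hτ'] at h1
    have : C * τ ^ α ≤ C / α * τ ^ α := by
      rw [div_mul_eq_mul_div, le_div_iff₀ hα0]
      nlinarith [mul_pos hC hτα]
    calc (∫ t in (0:ℝ)..τ, ‖E t - E τ‖) ≤ C * (τ ^ α / α) + C * τ ^ α := h1
    _ ≤ C * (τ ^ α / α) + C / α * τ ^ α := by linarith
    _ = 2 * C / α * τ ^ α := by ring
  -- Step B : subsequent intervals
  have hB : ∀ j ∈ Finset.Icc 2 J,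
      (∫ t in (((j:ℝ) - 1) * τ)..((j:ℝ) * τ), ‖E t - E ((j:ℝ) * τ)‖)
        ≤ C / (1 - α) * τ * ((((j:ℝ) - 1) * τ) ^ (α - 1) - ((j:ℝ) * τ) ^ (α - 1)) := by
    intro j hj
    rw [Finset.mem_Icc] at hj
    have hj2 : (2:ℝ) ≤ (j:ℝ) := by exact_mod_cast hj.1
    set a : ℝ := ((j:ℝ) - 1) * τ with ha_def
    set b : ℝ := (j:ℝ) * τ with hb_def
    have ha : 0 < a := by
      apply mul_pos _ hτ; linarith
    have hab : a < b := by
      rw [ha_def, hb_def]; nlinarith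
    have hsub : Set.uIcc a b ⊆ Set.Ioi (0:ℝ) := by
      rw [Set.uIcc_of_le hab.le]
      intro x hx
      exact lt_of_lt_of_le ha hx.1
    have hE'i : IntervalIntegrable E' volume a b :=
      (hE'cont.mono hsub).intervalIntegrable
    have hnE'i : IntervalIntegrable (fun s => ‖E' s‖) volume a b :=
      hE'i.norm
    have hrpow2 : IntervalIntegrable (fun s : ℝ => C * s ^ (α - 2)) volume a b := by
      apply ContinuousOn.intervalIntegrable
      exact continuousOn_const.mul (fun x hx => (Real.continuousAt_rpow_const x (α - 2)
        (Or.inl (ne_of_gt (hsub hx)))).continuousWithinAt)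
    set K : ℝ := ∫ s in a..b, ‖E' s‖ with hK_def
    have hptwise : ∀ t ∈ Set.Icc a b, ‖E t - E b‖ ≤ K := by
      intro t ht
      have htpos : 0 < t := lt_of_lt_of_le ha ht.1
      set ι : B →L[ℝ] UniformSpace.Completion B := UniformSpace.Completion.toComplL with hι_def
      have hι : ∀ x : B, ‖ι x‖ = ‖x‖ := fun x => UniformSpace.Completion.norm_coe x
      have hsub' : Set.uIcc t b ⊆ Set.uIcc a b := by
        rw [Set.uIcc_of_le ht.2, Set.uIcc_of_le hab.le]
        exact Set.Icc_subset_Icc ht.1 le_rfl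
      have hFi : IntervalIntegrable (fun s => ι (E' s)) volume t b := by
        apply ContinuousOn.intervalIntegrable
        exact ι.continuous.comp_continuousOn (hE'cont.mono (hsub.trans' hsub'))
      have hftc : (∫ s in t..b, ι (E' s)) = ι (E b) - ι (E t) := by
        apply intervalIntegral.integral_eq_sub_of_hasDerivAt (f := fun u => ι (E u))
        · intro s hs
          rw [Set.uIcc_of_le ht.2] at hs
          exact (ContinuousLinearMap.hasFDerivAt ι).comp_hasDerivAt s
            (hderiv s (lt_of_lt_of_le htpos hs.1))
        · exact hFi
      calc ‖E t - E b‖ = ‖(∫ s in t..b, ι (E' s))‖ := by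
            rw [hftc, ← map_sub, hι, norm_sub_rev]
      _ ≤ ∫ s in t..b, ‖ι (E' s)‖ := intervalIntegral.norm_integral_le_integral_norm ht.2
      _ = ∫ s in t..b, ‖E' s‖ := by
            apply intervalIntegral.integral_congr
            intro s _; exact hι _
      _ ≤ K := by
          apply intervalIntegral.integral_mono_interval ht.1 ht.2 le_rfl _ hnE'i
          filter_upwards with s using norm_nonneg _
    have hKbound : K ≤ C / (1 - α) * (a ^ (α - 1) - b ^ (α - 1)) := by
      have h1 : K ≤ ∫ s in a..b, C * s ^ (α - 2) := by
        apply intervalIntegral.integral_mono_on hab.le hnE'i hrpow2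
        intro s hs
        exact hE' s (lt_of_lt_of_le ha hs.1)
      have h2 : (∫ s in a..b, C * s ^ (α - 2))
          = C * ((b ^ (α - 1) - a ^ (α - 1)) / (α - 1)) := by
        rw [intervalIntegral.integral_const_mul, integral_rpow]
        · rw [show α - 2 + 1 = α - 1 by ring]
        · refine Or.inr ⟨by intro h; linarith, ?_⟩
          rw [Set.uIcc_of_le hab.le]
          intro h0
          exact absurd h0.1 (by linarith)
      rw [h2] at h1
      calc K ≤ C * ((b ^ (α - 1) - a ^ (α - 1)) / (α - 1)) := h1
      _ = C / (1 - α) * (a ^ (α - 1) - b ^ (α - 1)) := by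
          have hdiv : (b ^ (α - 1) - a ^ (α - 1)) / (α - 1)
              = (a ^ (α - 1) - b ^ (α - 1)) / (1 - α) := by
            rw [div_eq_div_iff (sub_ne_zero_of_ne (ne_of_lt hα1))
              (sub_ne_zero_of_ne (ne_of_gt hα1))]
            ring
          rw [hdiv]; ring
    have hfint : IntervalIntegrable (fun t => ‖E t - E b‖) volume a b := by
      apply ContinuousOn.intervalIntegrable
      exact ((hEcont.mono hsub).sub continuousOn_const).norm
    have hmain : (∫ t in a..b, ‖E t - E b‖) ≤ (b - a) * K := by
      have := intervalIntegral.integral_mono_on hab.le hfint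
        (intervalIntegrable_const (c := K)) hptwise
      rwa [intervalIntegral.integral_const, smul_eq_mul] at this
    have hba : b - a = τ := by rw [ha_def, hb_def]; ring
    calc (∫ t in a..b, ‖E t - E b‖) ≤ (b - a) * K := hmain
    _ = τ * K := by rw [hba]
    _ ≤ τ * (C / (1 - α) * (a ^ (α - 1) - b ^ (α - 1))) :=
        mul_le_mul_of_nonneg_left hKbound hτ.le
    _ = C / (1 - α) * τ * (a ^ (α - 1) - b ^ (α - 1)) := by ring
  -- split the sum
  have hsplit : Finset.Icc 1 J = insert 1 (Finset.Icc 2 J) := by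
    ext x; simp only [Finset.mem_Icc, Finset.mem_insert]; omega
  rw [hsplit, Finset.sum_insert (by simp [Finset.mem_Icc])]
  -- telescoping
  have htel : ∑ j ∈ Finset.Icc 2 J, ((((j:ℝ) - 1) * τ) ^ (α - 1) - ((j:ℝ) * τ) ^ (α - 1))
      = ((1:ℝ) * τ) ^ (α - 1) - ((J:ℝ) * τ) ^ (α - 1) := by
    have hIco : Finset.Icc 2 J = Finset.Ico 2 (J + 1) := by rw [Finset.Ico_add_one_right_eq_Icc]
    have hJ1 : J + 1 - 2 = J - 1 := by omega
    rw [hIco, Finset.sum_Ico_eq_sum_range, hJ1]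
    have hkey := Finset.sum_range_sub' (fun i : ℕ => (((i:ℝ) + 1) * τ) ^ (α - 1)) (J - 1)
    have hcast : ((J - 1 : ℕ) : ℝ) + 1 = (J : ℝ) := by
      have : ((J - 1 : ℕ) : ℝ) = (J : ℝ) - 1 := by
        have : (1:ℕ) ≤ J := hJ
        push_cast [this]; ring
      rw [this]; ring
    rw [hcast] at hkey
    simp only [Nat.cast_zero, zero_add] at hkey
    rw [← hkey]
    apply Finset.sum_congr rfl
    intro i _
    have h1 : ((2 + i : ℕ) : ℝ) - 1 = (i : ℝ) + 1 := by push_cast; ring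
    have h2 : ((2 + i : ℕ) : ℝ) = ((i : ℝ) + 1) + 1 := by push_cast; ring
    rw [h1, h2]
    norm_num
  have hBsum : ∑ j ∈ Finset.Icc 2 J,
      (∫ t in (((j:ℝ) - 1) * τ)..((j:ℝ) * τ), ‖E t - E ((j:ℝ) * τ)‖)
        ≤ C / (1 - α) * τ * (((1:ℝ) * τ) ^ (α - 1) - ((J:ℝ) * τ) ^ (α - 1)) := by
    calc ∑ j ∈ Finset.Icc 2 J,
        (∫ t in (((j:ℝ) - 1) * τ)..((j:ℝ) * τ), ‖E t - E ((j:ℝ) * τ)‖)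
        ≤ ∑ j ∈ Finset.Icc 2 J,
            C / (1 - α) * τ * ((((j:ℝ) - 1) * τ) ^ (α - 1) - ((j:ℝ) * τ) ^ (α - 1)) :=
          Finset.sum_le_sum hB
    _ = C / (1 - α) * τ *
          ∑ j ∈ Finset.Icc 2 J, ((((j:ℝ) - 1) * τ) ^ (α - 1) - ((j:ℝ) * τ) ^ (α - 1)) := by
        rw [Finset.mul_sum]
    _ = C / (1 - α) * τ * (((1:ℝ) * τ) ^ (α - 1) - ((J:ℝ) * τ) ^ (α - 1)) := by rw [htel]
  -- final arithmetic
  have hmulr : ((J:ℝ) * τ) ^ (α - 1) = (J:ℝ) ^ (α - 1) * τ ^ (α - 1) :=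
    Real.mul_rpow hJR.le hτ.le
  have hττ : τ ^ (α - 1) * τ = τ ^ α := by
    rw [← Real.rpow_add_one hτ.ne' (α - 1)]; norm_num
  have hS : ∑ j ∈ Finset.Icc 2 J,
      (∫ t in (((j:ℝ) - 1) * τ)..((j:ℝ) * τ), ‖E t - E ((j:ℝ) * τ)‖)
        ≤ C * τ ^ α * ((1 - (J:ℝ) ^ (α - 1)) / (1 - α)) := by
    refine hBsum.trans_eq ?_
    rw [hmulr, one_mul, ← hττ]
    field_simp
  have hJle1 : (J:ℝ) ^ (α - 1) ≤ 1 :=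
    Real.rpow_le_one_of_one_le_of_nonpos (by exact_mod_cast hJ) (by linarith)
  have hX : 0 ≤ (1 - (J:ℝ) ^ (α - 1)) / (1 - α) := div_nonneg (by linarith) (by linarith)
  have hA' : (∫ t in ((((1:ℕ):ℝ) - 1) * τ)..(((1:ℕ):ℝ) * τ), ‖E t - E (((1:ℕ):ℝ) * τ)‖)
      ≤ 2 * C / α * τ ^ α := by
    norm_num
    exact hA
  have hsum := add_le_add hA' hS
  refine hsum.trans ?_
  set X := (1 - (J:ℝ) ^ (α - 1)) / (1 - α)
  have h1 : 0 ≤ C * τ ^ α * X := mul_nonneg (mul_nonneg hC.le hτα.le) hX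
  have h2 : 2 * C / α * τ ^ α = 2 * C * τ ^ α * (1 / α) := by ring
  have h3 : 2 * C * τ ^ α * (1 / α + X) = 2 * C * τ ^ α * (1 / α) + 2 * (C * τ ^ α * X) := by
    ring
  linarith
end

section
/- Let X, H be Hilbert spaces, S, S_τ : X → H bounded linear maps, U_ad ⊆ X convex, y_d ∈ H, ν > 0. Let u minimize ½‖Sv-y_d‖² + (ν/2)‖v‖² over U_ad and U minimize ½‖S_τ v - y_d‖² + (ν/2)‖v‖² over U_ad. Then ν‖u-U‖² + ½‖Su - S_τ U‖² ≤ ⟨(S* - S_τ*)(Su - y_d), U - u⟩ + ‖(S - S_τ)u‖². -/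
open RealInnerProductSpace

theorem stmt_17 {X H : Type*} [NormedAddCommGroup X] [InnerProductSpace ℝ X] [CompleteSpace X]
    [NormedAddCommGroup H] [InnerProductSpace ℝ H] [CompleteSpace H]
    (S Sτ : X →L[ℝ] H) (Uad : Set X) (hconv : Convex ℝ Uad) (yd : H) (ν : ℝ) (hν : 0 < ν)
    (u U : X) (hu : u ∈ Uad) (hU : U ∈ Uad)
    (hvi_u : ∀ v ∈ Uad,
      (0:ℝ) ≤ ⟪(ContinuousLinearMap.adjoint S) (S u - yd) + ν • u, v - u⟫)
    (hvi_U : ∀ v ∈ Uad,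
      (0:ℝ) ≤ ⟪(ContinuousLinearMap.adjoint Sτ) (Sτ U - yd) + ν • U, v - U⟫) :
    ν * ‖u - U‖^2 + (1/2) * ‖S u - Sτ U‖^2 ≤
      ⟪(ContinuousLinearMap.adjoint S) (S u - yd) -
        (ContinuousLinearMap.adjoint Sτ) (S u - yd), U - u⟫ + ‖S u - Sτ u‖^2 := by
  have h1 := hvi_u U hU
  have h2 := hvi_U u hu
  have hy : (0:ℝ) ≤ ⟪Sτ U - Sτ u, Sτ U - Sτ u⟫ := real_inner_self_nonneg
  have hz : (0:ℝ) ≤ ⟪S u - Sτ u, S u - Sτ u⟫ := real_inner_self_nonneg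
  rw [← real_inner_self_eq_norm_sq, ← real_inner_self_eq_norm_sq, ← real_inner_self_eq_norm_sq]
  simp only [inner_add_left, inner_sub_left, inner_sub_right, inner_add_right,
    ContinuousLinearMap.adjoint_inner_left, real_inner_smul_left, map_sub,
    mul_sub, mul_add] at h1 h2 hy hz ⊢
  have c1 : ⟪S u, yd⟫ = ⟪yd, S u⟫ := real_inner_comm _ _
  have c2 : ⟪S u, S U⟫ = ⟪S U, S u⟫ := real_inner_comm _ _
  have c3 : ⟪S u, Sτ u⟫ = ⟪Sτ u, S u⟫ := real_inner_comm _ _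
  have c4 : ⟪S u, Sτ U⟫ = ⟪Sτ U, S u⟫ := real_inner_comm _ _
  have c5 : ⟪S U, yd⟫ = ⟪yd, S U⟫ := real_inner_comm _ _
  have c6 : ⟪S U, Sτ u⟫ = ⟪Sτ u, S U⟫ := real_inner_comm _ _
  have c7 : ⟪S U, Sτ U⟫ = ⟪Sτ U, S U⟫ := real_inner_comm _ _
  have c8 : ⟪Sτ u, yd⟫ = ⟪yd, Sτ u⟫ := real_inner_comm _ _
  have c9 : ⟪Sτ u, Sτ U⟫ = ⟪Sτ U, Sτ u⟫ := real_inner_comm _ _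
  have c10 : ⟪Sτ U, yd⟫ = ⟪yd, Sτ U⟫ := real_inner_comm _ _
  have c11 : ν * ⟪u, U⟫ = ν * ⟪U, u⟫ := by rw [real_inner_comm]
  have c12 : ⟪u, U⟫ = ⟪U, u⟫ := real_inner_comm _ _
  linarith
end

section
/- Let 0 < γ < 1/2 and define for v ∈ L²(0,T) the Riemann–Liouville integral (D^{-γ}v)(t) = (1/Γ(γ)) ∫₀^t (t-s)^(γ-1) v(s) ds. For the function v = τ^(-1)·1_{(T-τ,T)} (with 0 < τ ≤ T), the right-sided integral (D_{T-}^{-γ}v)(t) = (1/Γ(γ)) ∫_t^T (s-t)^(γ-1) v(s) ds satisfies ‖D_{T-}^{-γ} v‖_{L²(0,T)}² ≤ C_γ τ^(2γ-1) for a constant C_γ depending only on γ. -/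
/-!
For `t ≤ T` the right-sided integral equals `τ ^ (γ - 1) / Γ(γ + 1) · φ ((T - t) / τ)`, where
`φ u = u ^ γ - (u - 1)₊ ^ γ`. Substituting `u = (T - t) / τ`, the squared `L²` norm is
`τ ^ (2γ - 1) / Γ(γ + 1) ^ 2 · ∫₀^{T/τ} φ²`, and `∫₀^∞ φ² < ∞`: `0 ≤ φ ≤ 1`, and by concavity
`φ u ≤ γ (u - 1) ^ (γ - 1)`, whose square is integrable at infinity because `2γ - 2 < -1`.
-/

open MeasureTheory Real Set

noncomputable def stepProfile (γ u : ℝ) : ℝ := u ^ γ - max (u - 1) 0 ^ γ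

theorem rpow_add_sub_rpow_le {γ x h : ℝ} (hγ0 : 0 ≤ γ) (hγ1 : γ ≤ 1) (hx : 0 < x) (hh : 0 ≤ h) :
    (x + h) ^ γ - x ^ γ ≤ γ * h * x ^ (γ - 1) := by
  have hbern : (1 + h / x) ^ γ ≤ 1 + γ * (h / x) :=
    rpow_one_add_le_one_add_mul_self (by linarith [div_nonneg hh hx.le]) hγ0 hγ1
  calc (x + h) ^ γ - x ^ γ = x ^ γ * ((1 + h / x) ^ γ - 1) := by
        rw [mul_sub, mul_one, ← mul_rpow hx.le (by positivity), mul_one_add,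
          mul_div_cancel₀ _ hx.ne']
    _ ≤ x ^ γ * (γ * (h / x)) := by gcongr; linarith
    _ = γ * h * x ^ (γ - 1) := by rw [rpow_sub_one hx.ne']; ring

theorem integral_rpow_le_of_lt_neg_one {r a b : ℝ} (hr : r < -1) (ha : 0 < a) (hab : a ≤ b) :
    ∫ x in a..b, x ^ r ≤ a ^ (r + 1) / -(r + 1) := by
  have h0 : (0 : ℝ) ∉ uIcc a b := by rw [uIcc_of_le hab]; exact fun h ↦ ha.not_ge h.1
  rw [integral_rpow (Or.inr ⟨hr.ne, h0⟩), ← neg_div_neg_eq, neg_sub]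
  exact div_le_div_of_nonneg_right (by linarith [rpow_nonneg (ha.le.trans hab) (r + 1)])
    (by linarith)

section StepProfile

variable {γ : ℝ}

theorem stepProfile_nonneg (hγ : 0 ≤ γ) {u : ℝ} (hu : 0 ≤ u) : 0 ≤ stepProfile γ u :=
  sub_nonneg.2 <| rpow_le_rpow (le_max_right _ _) (max_le (by linarith) hu) hγ

theorem stepProfile_le_one (hγ0 : 0 < γ) (hγ1 : γ ≤ 1) {u : ℝ} (hu : 0 ≤ u) :
    stepProfile γ u ≤ 1 := by
  rcases le_or_gt u 1 with h | h
  · rw [stepProfile, max_eq_right (by linarith), zero_rpow hγ0.ne']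
    linarith [rpow_le_one hu h hγ0.le]
  · have := rpow_add_le_add_rpow (sub_nonneg.2 h.le) zero_le_one hγ0.le hγ1
    rw [sub_add_cancel, one_rpow] at this
    rw [stepProfile, max_eq_left (by linarith)]
    linarith

theorem stepProfile_le (hγ0 : 0 ≤ γ) (hγ1 : γ ≤ 1) {u : ℝ} (hu : 1 < u) :
    stepProfile γ u ≤ γ * (u - 1) ^ (γ - 1) := by
  have := rpow_add_sub_rpow_le hγ0 hγ1 (sub_pos.2 hu) zero_le_one
  rw [sub_add_cancel, mul_one] at this
  rwa [stepProfile, max_eq_left (by linarith)]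

theorem continuous_stepProfile (hγ : 0 ≤ γ) : Continuous (stepProfile γ) := by
  unfold stepProfile
  fun_prop (disch := exact hγ)

theorem rpow_mul_stepProfile_div {τ x : ℝ} (hτ : 0 < τ) (hx : 0 ≤ x) :
    τ ^ γ * stepProfile γ (x / τ) = x ^ γ - max (x - τ) 0 ^ γ := by
  have hmax : τ * max (x / τ - 1) 0 = max (x - τ) 0 := by
    rw [mul_max_of_nonneg _ _ hτ.le, mul_sub, mul_div_cancel₀ _ hτ.ne', mul_one, mul_zero]
  rw [stepProfile, mul_sub, ← mul_rpow hτ.le (div_nonneg hx hτ.le), mul_div_cancel₀ _ hτ.ne',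
    ← mul_rpow hτ.le (le_max_right _ _), hmax]

theorem integral_stepProfile_sq_le (hγ0 : 0 < γ) (hγ : γ < 1 / 2) {X : ℝ} (hX : 0 ≤ X) :
    ∫ u in 0..X, stepProfile γ u ^ 2 ≤ 2 + γ ^ 2 / (1 - 2 * γ) := by
  have hγ1 : γ ≤ 1 := by linarith
  have hint (a b : ℝ) : IntervalIntegrable (fun u ↦ stepProfile γ u ^ 2) volume a b :=
    ((continuous_stepProfile hγ0.le).pow 2).intervalIntegrable a b
  set Y := max X 2
  have hnear : ∫ u in 0..2, stepProfile γ u ^ 2 ≤ 2 := by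
    calc ∫ u in 0..2, stepProfile γ u ^ 2 ≤ ∫ _ in (0 : ℝ)..2, (1 : ℝ) :=
          intervalIntegral.integral_mono_on (by norm_num) (hint 0 2) intervalIntegrable_const
            fun u hu ↦ pow_le_one₀ (stepProfile_nonneg hγ0.le hu.1)
              (stepProfile_le_one hγ0 hγ1 hu.1)
      _ = 2 := by simp
  have hfar : ∫ u in 2..Y, stepProfile γ u ^ 2 ≤ γ ^ 2 / (1 - 2 * γ) := by
    have hY : 2 ≤ Y := le_max_right _ _
    have hcont : ContinuousOn (fun u ↦ γ ^ 2 * (u - 1) ^ (2 * γ - 2)) (uIcc 2 Y) := by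
      rw [uIcc_of_le hY]
      exact continuousOn_const.mul <| (continuousOn_id.sub continuousOn_const).rpow_const
        fun u hu ↦ Or.inl (show u - 1 ≠ 0 by linarith [hu.1])
    calc ∫ u in 2..Y, stepProfile γ u ^ 2 ≤ ∫ u in 2..Y, γ ^ 2 * (u - 1) ^ (2 * γ - 2) := by
          refine intervalIntegral.integral_mono_on hY (hint 2 Y) hcont.intervalIntegrable
            fun u hu ↦ ?_
          have hu1 : 0 < u - 1 := by linarith [hu.1]
          calc stepProfile γ u ^ 2 ≤ (γ * (u - 1) ^ (γ - 1)) ^ 2 :=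
                pow_le_pow_left₀ (stepProfile_nonneg hγ0.le (by linarith [hu.1]))
                  (stepProfile_le hγ0.le hγ1 (by linarith [hu.1])) 2
            _ = γ ^ 2 * (u - 1) ^ (2 * γ - 2) := by
                rw [mul_pow, ← rpow_mul_natCast hu1.le]
                ring_nf
      _ = γ ^ 2 * ∫ v in 1..Y - 1, v ^ (2 * γ - 2) := by
          rw [intervalIntegral.integral_const_mul,
            intervalIntegral.integral_comp_sub_right (fun v ↦ v ^ (2 * γ - 2))]
          norm_num
      _ ≤ γ ^ 2 * (1 ^ (2 * γ - 2 + 1) / -(2 * γ - 2 + 1)) := by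
          gcongr
          exact integral_rpow_le_of_lt_neg_one (by linarith) one_pos (by linarith)
      _ = γ ^ 2 / (1 - 2 * γ) := by rw [one_rpow]; ring_nf
  calc ∫ u in 0..X, stepProfile γ u ^ 2 ≤ ∫ u in 0..Y, stepProfile γ u ^ 2 :=
        intervalIntegral.integral_mono_interval le_rfl hX (le_max_left _ _)
          (ae_restrict_of_forall_mem measurableSet_Ioc
            fun u hu ↦ sq_nonneg (stepProfile γ u)) (hint 0 Y)
    _ = (∫ u in 0..2, stepProfile γ u ^ 2) + ∫ u in 2..Y, stepProfile γ u ^ 2 :=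
        (intervalIntegral.integral_add_adjacent_intervals (hint 0 2) (hint 2 Y)).symm
    _ ≤ 2 + γ ^ 2 / (1 - 2 * γ) := add_le_add hnear hfar

end StepProfile

theorem integral_rpow_sub_mul_ite_eq {γ T τ t : ℝ} (hγ : 0 < γ) (hτ : 0 < τ) (ht : t ≤ T) :
    ∫ s in t..T, (s - t) ^ (γ - 1) * (if T - τ < s ∧ s < T then 1 / τ else 0) =
      τ ^ (γ - 1) / γ * stepProfile γ ((T - t) / τ) := by
  have hind : (fun s ↦ (s - t) ^ (γ - 1) * (if T - τ < s ∧ s < T then 1 / τ else 0)) =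
      (Ioo (T - τ) T).indicator fun s ↦ (s - t) ^ (γ - 1) / τ := by
    ext s
    simp only [indicator_apply, mem_Ioo]
    split_ifs <;> ring
  have hmax : max t (T - τ) - t = max (T - t - τ) 0 := by
    rw [← max_sub_sub_right, sub_self, max_comm, sub_right_comm]
  rw [hind, intervalIntegral.integral_of_le ht, setIntegral_indicator measurableSet_Ioo,
    Ioc_inter_Ioo_of_right_le le_rfl, ← integral_Ioc_eq_integral_Ioo,
    ← intervalIntegral.integral_of_le (max_le ht (by linarith)), intervalIntegral.integral_div,
    intervalIntegral.integral_comp_sub_right (fun x ↦ x ^ (γ - 1)),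
    integral_rpow (Or.inl (by linarith)), sub_add_cancel, hmax,
    ← rpow_mul_stepProfile_div hτ (sub_nonneg.2 ht), rpow_sub_one hτ.ne']
  field_simp

theorem stmt_19 (γ : ℝ) (hγ : γ ∈ Set.Ioo (0:ℝ) (1/2)) :
    ∃ C > 0, ∀ T τ : ℝ, 0 < τ → τ ≤ T →
      (∫ t in (0:ℝ)..T,
        ((1 / Real.Gamma γ) *
          ∫ s in t..T, (s - t) ^ (γ - 1) * (if T - τ < s ∧ s < T then 1/τ else 0)) ^ 2) ≤
        C * τ ^ (2 * γ - 1) := by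
  obtain ⟨hγ0, hγ⟩ := hγ
  set K := 2 + γ ^ 2 / (1 - 2 * γ)
  have hK : 0 < K := by
    have : 0 < 1 - 2 * γ := by linarith
    positivity
  have hΓ : 0 < Gamma γ := Gamma_pos_of_pos hγ0
  refine ⟨K / (Gamma γ * γ) ^ 2, by positivity, fun T τ hτ hτT ↦ ?_⟩
  have hT : 0 ≤ T := hτ.le.trans hτT
  have hpow : (τ ^ (γ - 1)) ^ 2 * τ = τ ^ (2 * γ - 1) := by
    rw [← rpow_mul_natCast hτ.le, ← rpow_add_one hτ.ne']
    ring_nf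
  calc _ = ∫ t in 0..T, (τ ^ (γ - 1) / (Gamma γ * γ)) ^ 2 * stepProfile γ ((T - t) / τ) ^ 2 := by
        refine intervalIntegral.integral_congr fun t ht ↦ ?_
        rw [uIcc_of_le hT] at ht
        rw [integral_rpow_sub_mul_ite_eq hγ0 hτ ht.2]
        ring
    _ = (τ ^ (γ - 1) / (Gamma γ * γ)) ^ 2 * τ * ∫ u in 0..T / τ, stepProfile γ u ^ 2 := by
        simp_rw [sub_div]
        rw [intervalIntegral.integral_const_mul,
          intervalIntegral.integral_comp_sub_div (fun u ↦ stepProfile γ u ^ 2) hτ.ne']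
        simp only [sub_zero, zero_div, sub_self, smul_eq_mul]
        ring
    _ ≤ (τ ^ (γ - 1) / (Gamma γ * γ)) ^ 2 * τ * K := by
        gcongr
        exact integral_stepProfile_sq_le hγ0 hγ (div_nonneg hT hτ.le)
    _ = K / (Gamma γ * γ) ^ 2 * τ ^ (2 * γ - 1) := by
        rw [← hpow]
        ring
end
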